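/- arXiv:1305.4238 — 2 statements merged into one kernel-verified Lean document; each statement's English description precedes it below -/
import Mathlib

section
/- Let R be a one-dimensional Cohen–Macaulay local ring admitting a canonical module K_R, let F = Q(R) be its total ring of fractions, and let I be a fractional ideal of R with FI = F. Set I^∨ = Hom_R(I, K_R) and let t : I ⊗_R I^∨ → K_R be the R-linear map with t(x ⊗ f) = f(x). Then the R-module I ⊗_R I^∨ is torsionfree if and only if the map t is injective. -/
open CategoryTheory TensorProduct

noncomputable section

/-- Minimal number of generators of a submodule. -/
def minGen (R : Type*) {M : Type*} [Semiring R] [AddCommMonoid M] [Module R M]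
    (p : Submodule R M) : ℕ :=
  sInf {n | ∃ s : Finset M, s.card = n ∧ Submodule.span R (s : Set M) = p}

/-- Length of a module, as the height of `⊤` in its lattice of submodules. -/
def moduleLength (R M : Type*) [Ring R] [AddCommGroup M] [Module R M] : ℕ∞ :=
  Order.height (⊤ : Submodule R M)

/-- The `i`-th Ext module `Ext_R^i(M, N)`. -/
def extMod (R : Type u) [CommRing R] (M N : ModuleCat.{u} R) (i : ℕ) : ModuleCat R :=
  ((Ext R (ModuleCat.{u} R) i).obj (Opposite.op M)).obj N

/-- `K` is a canonical module of the one-dimensional Cohen–Macaulay local ring `R` with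
maximal ideal `m`, via the Bass-number characterization:
`Ext^i(R/m, K) = 0` for `i ≠ 1` and `Ext^1(R/m, K) ≅ R/m`. -/
def IsCanonicalModuleAt (R : Type u) [CommRing R] (m : Ideal R)
    (K : Type u) [AddCommGroup K] [Module R K] : Prop :=
  Module.Finite R K ∧
  (∀ i : ℕ, i ≠ 1 →
    Subsingleton (extMod R (ModuleCat.of R (R ⧸ m)) (ModuleCat.of R K) i)) ∧
  Nonempty ((extMod R (ModuleCat.of R (R ⧸ m)) (ModuleCat.of R K) 1) ≅
    ModuleCat.of R (R ⧸ m))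

/-- The evaluation map `I ⊗_R Hom_R(I, K) → K`, `x ⊗ f ↦ f x`. -/
def evalMap (R : Type*) [CommRing R] {M : Type*} [AddCommGroup M] [Module R M]
    (I : Submodule R M) (K : Type*) [AddCommGroup K] [Module R K] :
    (I ⊗[R] (I →ₗ[R] K)) →ₗ[R] K :=
  TensorProduct.lift LinearMap.applyₗ

/-- A fractional ideal `I` of `R` with `FI = F`: a finitely generated `R`-submodule of the
total ring of fractions `F = Q(R)` containing a unit of `F`. -/
def IsFracIdealUnit (R : Type*) [CommRing R] (I : Submodule R (FractionRing R)) : Prop :=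
  I.FG ∧ ∃ x ∈ I, IsUnit x

/-- A one-dimensional Cohen–Macaulay local ring: Noetherian, local, Krull dimension one,
and the maximal ideal contains a nonzerodivisor. -/
def IsOneDimCMLocal (R : Type*) [CommRing R] [IsLocalRing R] : Prop :=
  IsNoetherianRing R ∧ ringKrullDim R = 1 ∧
    ∃ x ∈ IsLocalRing.maximalIdeal R, x ∈ nonZeroDivisors R

/-!
Since `I` is finitely generated and contains a unit `u` of `F`, one nonzerodivisor `s` satisfies
`s I ⊆ R u`. Then `s` moves every element of `I ⊗ I^∨` to a pure tensor `u ⊗ g`, and if it lies in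
`ker t` then `g u = 0`, whence `s g = 0`; so `ker t` is torsion. Conversely, `Hom(R/m, K) = Ext⁰`
vanishes, so `m` is not an associated prime of `K`; an associated prime containing a nonzerodivisor
is not minimal, hence equals `m` since `dim R = 1`. Thus `K` is torsionfree, and so is every module
embedding into it.
-/

theorem Submodule.FG.exists_smul_mem_span_singleton_of_isUnit {R S : Type*} [CommRing R]
    [CommRing S] [Algebra R S] (M : Submonoid R) [IsLocalization M S] {I : Submodule R S}
    (hI : I.FG) {u : S} (hu : IsUnit u) : ∃ s ∈ M, ∀ a ∈ I, s • a ∈ R ∙ u := by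
  obtain ⟨s, hs, hint⟩ :=
    FractionalIdeal.isFractional_of_fg (S := M) (hI.map (LinearMap.mulLeft R ↑hu.unit⁻¹))
  refine ⟨s, hs, fun a ha => Submodule.mem_span_singleton.mpr ?_⟩
  obtain ⟨α, hα⟩ := hint _ (Submodule.mem_map_of_mem ha)
  refine ⟨α, ?_⟩
  rw [Algebra.smul_def, hα, LinearMap.mulLeft_apply, smul_mul_assoc, mul_comm, ← mul_assoc,
    IsUnit.mul_val_inv, one_mul]

section EvalMap

variable {R M : Type*} [CommRing R] [AddCommGroup M] [Module R M] {I : Submodule R M} {u : M}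
  {s : R}

theorem Submodule.exists_smul_eq_tmul_of_smul_mem_span_singleton (huI : u ∈ I)
    (hs : ∀ a ∈ I, s • a ∈ R ∙ u) {N : Type*} [AddCommMonoid N] [Module R N] (y : I ⊗[R] N) :
    ∃ n : N, s • y = (⟨u, huI⟩ : I) ⊗ₜ n := by
  induction y with
  | zero => exact ⟨0, by simp⟩
  | tmul a n =>
    obtain ⟨α, hα⟩ := Submodule.mem_span_singleton.mp (hs a a.2)
    have hαI : s • a = α • (⟨u, huI⟩ : I) := Subtype.ext hα.symm
    exact ⟨α • n, by rw [smul_tmul', hαI, smul_tmul]⟩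
  | add y z hy hz =>
    obtain ⟨n, hn⟩ := hy
    obtain ⟨n', hn'⟩ := hz
    exact ⟨n + n', by rw [smul_add, hn, hn', tmul_add]⟩

theorem ker_evalMap_le_torsion' (huI : u ∈ I) (S : Submonoid R) (hsS : s ∈ S)
    (hs : ∀ a ∈ I, s • a ∈ R ∙ u) (K : Type*) [AddCommGroup K] [Module R K] :
    LinearMap.ker (evalMap R I K) ≤ Submodule.torsion' R (I ⊗[R] (I →ₗ[R] K)) S := by
  intro y hy
  obtain ⟨g, hg⟩ := Submodule.exists_smul_eq_tmul_of_smul_mem_span_singleton huI hs y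
  have hgu : g ⟨u, huI⟩ = 0 := by
    have h := congrArg (s • ·) (LinearMap.mem_ker.mp hy)
    rwa [← map_smul, hg, smul_zero, evalMap, lift.tmul] at h
  have hsg : s • g = 0 := by
    ext a
    obtain ⟨α, hα⟩ := Submodule.mem_span_singleton.mp (hs a a.2)
    have hαI : s • a = α • (⟨u, huI⟩ : I) := Subtype.ext hα.symm
    rw [LinearMap.smul_apply, ← map_smul, hαI, map_smul, hgu, smul_zero, LinearMap.zero_apply]
  refine ⟨⟨s * s, mul_mem hsS hsS⟩, ?_⟩
  show (s * s) • y = 0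
  rw [mul_smul, hg, ← tmul_smul, hsg, tmul_zero]

end EvalMap

theorem Submodule.torsion'_eq_bot_of_injective {R M N : Type*} [CommRing R] [AddCommMonoid M]
    [Module R M] [AddCommMonoid N] [Module R N] (S : Submonoid R) {f : M →ₗ[R] N}
    (hf : Function.Injective f) (hN : Submodule.torsion' R N S = ⊥) :
    Submodule.torsion' R M S = ⊥ := by
  refine eq_bot_iff.mpr fun x ⟨s, hs⟩ => ?_
  have hfx : f x ∈ Submodule.torsion' R N S :=
    ⟨s, show (s : R) • f x = 0 by rw [← map_smul, ← Submonoid.smul_def, hs, map_zero]⟩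
  rw [hN, Submodule.mem_bot, ← map_zero f] at hfx
  exact hf hfx

open IsLocalRing in
theorem Submodule.torsion_eq_bot_of_subsingleton_linearMap_residue {R : Type*} [CommRing R]
    [IsLocalRing R] [IsNoetherianRing R] [Ring.KrullDimLE 1 R] (M : Type*) [AddCommGroup M]
    [Module R M] (hM : Subsingleton (R ⧸ maximalIdeal R →ₗ[R] M)) :
    Submodule.torsion R M = ⊥ := by
  refine eq_bot_iff.mpr fun y ⟨r, hr⟩ => (Submodule.mem_bot R).mpr ?_
  by_contra hy
  obtain ⟨P, hP, hyP⟩ := exists_le_isAssociatedPrime_of_isNoetherianRing R y hy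
  have hrP : (r : R) ∈ P := hyP (Submodule.mem_colon_singleton.mpr (hr ▸ zero_mem _))
  have hPm : P = maximalIdeal R := by
    refine eq_maximalIdeal (((Ring.krullDimLE_one_iff.mp ‹_›) P hP.isPrime).resolve_left ?_)
    exact fun hmin =>
      Set.disjoint_left.mp (Ideal.disjoint_nonZeroDivisors_of_mem_minimalPrimes hmin) hrP r.2
  obtain ⟨-, f, hf⟩ := (isAssociatedPrime_iff_exists_injective_linearMap P M).mp hP
  subst hPm
  rw [Subsingleton.elim f 0] at hf
  exact Function.not_injective_iff.mpr ⟨1, 0, rfl, one_ne_zero⟩ hf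

theorem subsingleton_linearMap_of_subsingleton_extMod_zero {R : Type u} [CommRing R]
    (M N : ModuleCat.{u} R) (h : Subsingleton (extMod R M N 0)) : Subsingleton (M →ₗ[R] N) := by
  let G := (linearYoneda R (ModuleCat.{u} R)).obj N
  have : Limits.PreservesLimits (G ⋙ forget₂ (ModuleCat.{u} R) AddCommGrpCat) :=
    inferInstanceAs (Limits.PreservesLimits (preadditiveYoneda.obj N))
  have : Limits.PreservesLimits G :=
    Limits.preservesLimits_of_reflects_of_preserves G (forget₂ (ModuleCat.{u} R) AddCommGrpCat)
  have : Limits.PreservesFiniteColimits G.rightOp := Limits.preservesFiniteColimits_rightOp G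
  -- `Ext⁰` is the zeroth left derived functor of the right exact functor `Hom(-, N)ᵒᵖ`.
  let e : ModuleCat.of R (M ⟶ N) ≅ extMod R M N 0 := (G.rightOp.leftDerivedZeroIsoSelf.app M).unop
  have : Subsingleton (M ⟶ N) := ((forget (ModuleCat.{u} R)).mapIso e).toEquiv.subsingleton
  exact ModuleCat.homEquiv.symm.subsingleton

/-- For a one-dimensional Cohen–Macaulay local ring `R` with canonical
module `K`, and a fractional ideal `I` with `FI = F`, the module `I ⊗_R Hom_R(I, K)` is
torsionfree if and only if the evaluation map `t : I ⊗_R Hom_R(I, K) → K` is injective. -/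
theorem stmt0 (R : Type u) [CommRing R] [IsLocalRing R]
    (hCM : IsOneDimCMLocal R)
    (K : Type u) [AddCommGroup K] [Module R K]
    (hK : IsCanonicalModuleAt R (IsLocalRing.maximalIdeal R) K)
    (I : Submodule R (FractionRing R)) (hI : IsFracIdealUnit R I) :
    Submodule.torsion R (I ⊗[R] (I →ₗ[R] K)) = ⊥ ↔
      Function.Injective (evalMap R I K) := by
  obtain ⟨hNoeth, hdim, -⟩ := hCM
  obtain ⟨hFG, u, huI, hu⟩ := hI
  have : Ring.KrullDimLE 1 R := Ring.krullDimLE_iff.mpr hdim.le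
  have hKtor : Submodule.torsion R K = ⊥ :=
    Submodule.torsion_eq_bot_of_subsingleton_linearMap_residue K
      (subsingleton_linearMap_of_subsingleton_extMod_zero _ (.of R K) (hK.2.1 0 zero_ne_one))
  obtain ⟨s, hs, hsI⟩ := hFG.exists_smul_mem_span_singleton_of_isUnit (nonZeroDivisors R) hu
  refine ⟨fun htor x y hxy => ?_, fun hinj => Submodule.torsion'_eq_bot_of_injective _ hinj hKtor⟩
  have hxy' : x - y ∈ Submodule.torsion R (I ⊗[R] (I →ₗ[R] K)) :=
    ker_evalMap_le_torsion' huI _ hs hsI K (by rw [LinearMap.mem_ker, map_sub, hxy, sub_self])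
  rwa [htor, Submodule.mem_bot, sub_eq_zero] at hxy'
end
end

section
/- Let R = k[[t^{a_1}, …, t^{a_ℓ}]] be a numerical semigroup ring with e = a_1 ≥ 2, a = c(H) − 1, and K_R = Σ_{n ∈ ℤ∖H} R t^{a−n}. Let I = (1, t^{c_1}) and J = K_R : I = (1, t^{c_2}) be monomial fractional ideals with c_1, c_2 > 0, and assume IJ = K_R and μ_R(K_R) = 4 (so 1, t^{c_1}, t^{c_2}, t^{c_1+c_2} minimally generate K_R). Set c_3 = c_1 + c_2 and choose b_1, b_2, b_3 ∈ S with c_1 = a − b_1, c_2 = a − b_2, c_3 = a − b_3 (so b_3 = b_1 + b_2 − a). Then: (1) a = b_1 + b_2 − b_3 ∉ H; (2) 2b_1 − a = b_1 + b_3 − b_2 ∈ H; (3) 2b_2 − a = b_2 + b_3 − b_1 ∈ H; (4) b_2 + b_3 − a = 2b_3 − b_1 ∈ H; (5) b_1 + b_3 − a = 2b_3 − b_2 ∈ H; (6) 2b_2 − b_3 ∈ H. -/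
open CategoryTheory TensorProduct PowerSeries

set_option synthInstance.maxHeartbeats 1000000
set_option maxHeartbeats 2000000

noncomputable section

/-- The numerical semigroup `H = ⟨a_1, …, a_ℓ⟩ ⊆ ℕ`. -/
def nsH (l : ℕ) (a : Fin l → ℕ) : AddSubmonoid ℕ :=
  AddSubmonoid.closure (Set.range a)

/-- The conductor `c(H)` of the numerical semigroup `H`:
the least `c` with `n ∈ H` for all `n ≥ c`. -/
def nsCond (l : ℕ) (a : Fin l → ℕ) : ℕ :=
  sInf {c : ℕ | ∀ n : ℕ, c ≤ n → n ∈ nsH l a}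

/-- `a = c(H) − 1`, the Frobenius number of `H`. -/
def nsFrob (l : ℕ) (a : Fin l → ℕ) : ℕ := nsCond l a - 1

/-- The numerical semigroup ring `R = k[[t^{a_1}, …, t^{a_ℓ}]] ⊆ V = k[[t]]`. -/
def nsRing (k : Type*) [Field k] (l : ℕ) (a : Fin l → ℕ) :
    Subalgebra k (PowerSeries k) :=
  Algebra.adjoin k (Set.range fun i => (PowerSeries.X : PowerSeries k) ^ (a i))

/-- The canonical module `K_R = Σ_{n ∈ ℤ∖H} R t^{a−n}` of the numerical semigroup ring,
as the `R`-submodule of `V = k[[t]]` spanned by the monomials `t^m` (`m ∈ ℕ`) with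
`a − m ∉ H` (as integers), where `a = c(H) − 1`. -/
def nsCanon (k : Type*) [Field k] (l : ℕ) (a : Fin l → ℕ) :
    Submodule (nsRing k l a) (PowerSeries k) :=
  Submodule.span (nsRing k l a)
    {x : PowerSeries k | ∃ m : ℕ,
      (¬ ∃ h ∈ nsH l a, (h : ℤ) = (nsFrob l a : ℤ) - m) ∧
      x = (PowerSeries.X : PowerSeries k) ^ m}

/-- A monomial (fractional) ideal of the numerical semigroup ring: an `R`-submodule of
`V = k[[t]]` spanned by monomials `tⁿ`. -/
def IsMonomialSub (k : Type*) [Field k] (l : ℕ) (a : Fin l → ℕ)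
    (I : Submodule (nsRing k l a) (PowerSeries k)) : Prop :=
  ∃ Λ : Set ℕ, I = Submodule.span (nsRing k l a)
    ((fun n => (PowerSeries.X : PowerSeries k) ^ n) '' Λ)

/-- A monomial ideal of the numerical semigroup ring: an ideal generated by
powers of `t`. -/
def IsMonomialIdeal (k : Type*) [Field k] (l : ℕ) (a : Fin l → ℕ)
    (I : Ideal (nsRing k l a)) : Prop :=
  ∃ Λ : Set ℕ, I = Ideal.span
    {x : nsRing k l a | ∃ n ∈ Λ, (x : PowerSeries k) = (PowerSeries.X : PowerSeries k) ^ n}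

/-- The maximal ideal `m = (t^{a_1}, …, t^{a_ℓ})` of the numerical semigroup ring. -/
def nsMax (k : Type*) [Field k] (l : ℕ) (a : Fin l → ℕ) : Ideal (nsRing k l a) :=
  Ideal.span {x : nsRing k l a | ∃ i : Fin l,
    (x : PowerSeries k) = (PowerSeries.X : PowerSeries k) ^ (a i)}


/-- The colon `M : N = {x ∈ A | x N ⊆ M}` of two `R`-submodules of an `R`-algebra `A`. -/
def colonSub {R A : Type*} [CommRing R] [CommRing A] [Algebra R A]
    (M N : Submodule R A) : Submodule R A where
  carrier := {x : A | ∀ y ∈ N, x * y ∈ M}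
  add_mem' := fun {a b} ha hb y hy => by
    rw [add_mul]; exact M.add_mem (ha y hy) (hb y hy)
  zero_mem' := fun y hy => by rw [zero_mul]; exact M.zero_mem
  smul_mem' := fun c {x} hx y hy => by
    rw [smul_mul_assoc]; exact M.smul_mem c (hx y hy)

/-- The set `S = {α_i : 1 ≤ i ≤ e−1}` where
`α_i = max {n ∈ ℤ∖H : n ≡ i mod e}`: the elements of `ℕ∖H` that are largest in their
residue class modulo `e`. (For `e ∈ H` the residue class `0 mod e` contributes nothing.) -/
def nsS (l : ℕ) (a : Fin l → ℕ) (e : ℕ) : Set ℕ :=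
  {n : ℕ | n ∉ nsH l a ∧ ∀ m : ℕ, m ∉ nsH l a → m % e = n % e → m ≤ n}

/-- The numerical semigroup `H`, viewed inside `ℤ`. -/
def nsHz (l : ℕ) (a : Fin l → ℕ) : Set ℤ :=
  {n : ℤ | ∃ h ∈ nsH l a, (h : ℤ) = n}

/-! Monomial membership is read off the exponents: `tⁿ` lies in the `R`-span of the monomials
`tᵐ` (`m ∈ Λ`) iff `n - m ∈ H` for some `m ∈ Λ`, and `tⁿ ∈ K_R` iff `a - n ∉ H`. Since
`K_R = IJ = (1, t^c₁, t^c₂, t^(c₁+c₂))` needs four generators, no two of the exponents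
`0, c₁, c₂, c₁ + c₂` differ by an element of `H`. Each assertion then comes from testing one
monomial `tⁿ`, with `n = c₁, b₂, b₃, c₁ + c₂` or `c₂ - c₁`, against `J = K_R : I`: if `tⁿ ∈ K_R`
but `tⁿ ∉ J`, then `t^(n+c₁) ∉ K_R`, that is `a - n - c₁ ∈ H`. -/

section Semigroup

variable {l : ℕ} {a : Fin l → ℕ}

lemma natCast_mem_nsHz {n : ℕ} : (n : ℤ) ∈ nsHz l a ↔ n ∈ nsH l a :=
  ⟨fun ⟨_, hh, e⟩ => Nat.cast_injective e ▸ hh, fun hn => ⟨n, hn, rfl⟩⟩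

lemma nonneg_of_mem_nsHz {n : ℤ} (hn : n ∈ nsHz l a) : 0 ≤ n := by
  obtain ⟨h, -, rfl⟩ := hn
  positivity

lemma add_mem_nsHz {m n : ℤ} (hm : m ∈ nsHz l a) (hn : n ∈ nsHz l a) : m + n ∈ nsHz l a := by
  obtain ⟨g, hg, rfl⟩ := hm
  obtain ⟨h, hh, rfl⟩ := hn
  exact ⟨g + h, add_mem hg hh, by push_cast; rfl⟩

-- `sInf ∅ = 0` in `ℕ`, so a positive Frobenius number guarantees that a conductor exists.
lemma mem_nsH_of_nsCond_le (hF : 0 < nsFrob l a) {n : ℕ} (hn : nsCond l a ≤ n) : n ∈ nsH l a := by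
  refine Nat.sInf_mem (s := {c : ℕ | ∀ n : ℕ, c ≤ n → n ∈ nsH l a}) ?_ n hn
  by_contra hempty
  rw [Set.not_nonempty_iff_eq_empty] at hempty
  simp [nsFrob, nsCond, hempty] at hF

lemma mem_nsHz_of_nsFrob_lt (hF : 0 < nsFrob l a) {n : ℤ} (hn : (nsFrob l a : ℤ) < n) :
    n ∈ nsHz l a := by
  lift n to ℕ using by omega
  exact natCast_mem_nsHz.2 (mem_nsH_of_nsCond_le hF (by unfold nsFrob at hn; omega))

lemma nsFrob_notMem_nsHz (hF : 0 < nsFrob l a) : (nsFrob l a : ℤ) ∉ nsHz l a := by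
  rw [natCast_mem_nsHz]
  intro hmem
  have hle : nsCond l a ≤ nsFrob l a := Nat.sInf_le fun n hn => by
    rcases hn.eq_or_lt with rfl | hlt
    · exact hmem
    · exact mem_nsH_of_nsCond_le hF (by unfold nsFrob at hlt; omega)
  unfold nsFrob at hF hle
  omega

end Semigroup

section Monomials

variable {k : Type*} [Field k] {l : ℕ} {a : Fin l → ℕ}

lemma X_pow_mem_nsRing {h : ℕ} (hh : h ∈ nsH l a) : (X : k⟦X⟧) ^ h ∈ nsRing k l a := by
  induction hh using AddSubmonoid.closure_induction with
  | mem x hx =>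
    obtain ⟨i, rfl⟩ := hx
    exact Algebra.subset_adjoin (Set.mem_range_self i)
  | zero => simp
  | add x y _ _ hx hy => rw [pow_add]; exact mul_mem hx hy

lemma coeff_ne_zero_or_of_coeff_add_ne_zero {f g : k⟦X⟧} {j : ℕ}
    (h : coeff j (f + g) ≠ 0) : coeff j f ≠ 0 ∨ coeff j g ≠ 0 := by
  by_contra! hfg
  simp [hfg.1, hfg.2] at h

lemma exists_coeff_ne_zero_of_coeff_mul_ne_zero {f g : k⟦X⟧} {j : ℕ}
    (h : coeff j (f * g) ≠ 0) : ∃ p q, p + q = j ∧ coeff p f ≠ 0 ∧ coeff q g ≠ 0 := by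
  rw [coeff_mul] at h
  obtain ⟨⟨p, q⟩, hpq, hne⟩ := Finset.exists_ne_zero_of_sum_ne_zero h
  exact ⟨p, q, Finset.HasAntidiagonal.mem_antidiagonal.1 hpq, left_ne_zero_of_mul hne,
    right_ne_zero_of_mul hne⟩

lemma mem_nsH_of_coeff_ne_zero {r : k⟦X⟧} (hr : r ∈ nsRing k l a) {j : ℕ}
    (hj : coeff j r ≠ 0) : j ∈ nsH l a := by
  induction hr using Algebra.adjoin_induction generalizing j with
  | mem x hx =>
    obtain ⟨i, rfl⟩ := hx
    obtain rfl : j = a i := by by_contra hne; simp [coeff_X_pow, hne] at hj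
    exact AddSubmonoid.subset_closure (Set.mem_range_self i)
  | algebraMap c =>
    obtain rfl : j = 0 := by by_contra hne; simp [coeff_C, hne] at hj
    exact zero_mem _
  | add x y _ _ hx hy =>
    exact (coeff_ne_zero_or_of_coeff_add_ne_zero hj).elim hx hy
  | mul x y _ _ hx hy =>
    obtain ⟨p, q, rfl, hp, hq⟩ := exists_coeff_ne_zero_of_coeff_mul_ne_zero hj
    exact add_mem (hx hp) (hy hq)

-- Every element of the span is supported on `Λ + H`, and the coefficient of `tⁿ` in `tⁿ` is `1`.
lemma X_pow_mem_span_image_iff (Λ : Set ℕ) (n : ℕ) :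
    (X : k⟦X⟧) ^ n ∈ Submodule.span (nsRing k l a) ((X ^ ·) '' Λ) ↔
      ∃ m ∈ Λ, (n : ℤ) - m ∈ nsHz l a := by
  constructor
  · intro hn
    let supp : Submodule (nsRing k l a) k⟦X⟧ :=
      { carrier := {f | ∀ j, coeff j f ≠ 0 → ∃ m ∈ Λ, (j : ℤ) - m ∈ nsHz l a}
        add_mem' := fun hf hg j hj =>
          (coeff_ne_zero_or_of_coeff_add_ne_zero hj).elim (hf j) (hg j)
        zero_mem' := fun j hj => by simp at hj
        smul_mem' := fun r f hf j hj => by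
          obtain ⟨p, q, rfl, hp, hq⟩ := exists_coeff_ne_zero_of_coeff_mul_ne_zero hj
          obtain ⟨m, hm, hqm⟩ := hf q hq
          refine ⟨m, hm, ?_⟩
          have hpH := natCast_mem_nsHz.2 (mem_nsH_of_coeff_ne_zero r.2 hp)
          convert add_mem_nsHz hpH hqm using 1
          push_cast
          ring }
    have hle : Submodule.span (nsRing k l a) ((X ^ ·) '' Λ) ≤ supp := by
      rw [Submodule.span_le]
      rintro _ ⟨m, hm, rfl⟩ j hj
      obtain rfl : j = m := by by_contra hne; simp [coeff_X_pow, hne] at hj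
      exact ⟨j, hm, by simpa using ⟨0, zero_mem _, rfl⟩⟩
    exact hle hn n (by simp)
  · rintro ⟨m, hm, h, hh, hnm⟩
    have hpow : (X : k⟦X⟧) ^ n = (⟨X ^ h, X_pow_mem_nsRing hh⟩ : nsRing k l a) • X ^ m := by
      rw [Subalgebra.smul_def, smul_eq_mul, ← pow_add]
      congr 1
      omega
    rw [hpow]
    exact Submodule.smul_mem _ _ (Submodule.subset_span ⟨m, hm, rfl⟩)

lemma X_pow_mem_nsCanon_iff (n : ℕ) :
    (X : k⟦X⟧) ^ n ∈ nsCanon k l a ↔ (nsFrob l a : ℤ) - n ∉ nsHz l a := by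
  have hgen : {x : k⟦X⟧ | ∃ m : ℕ,
      (¬ ∃ h ∈ nsH l a, (h : ℤ) = (nsFrob l a : ℤ) - m) ∧ x = X ^ m} =
      (X ^ ·) '' {m : ℕ | (nsFrob l a : ℤ) - m ∉ nsHz l a} := by
    ext x
    exact exists_congr fun m => and_congr Iff.rfl eq_comm
  rw [nsCanon, hgen, X_pow_mem_span_image_iff]
  constructor
  · rintro ⟨m, hm, hnm⟩ hn
    exact hm (by simpa using add_mem_nsHz hn hnm)
  · exact fun hn => ⟨n, hn, by simpa using ⟨0, zero_mem _, rfl⟩⟩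

end Monomials

lemma mem_colonSub_span_iff {R A : Type*} [CommRing R] [CommRing A] [Algebra R A]
    (M : Submodule R A) (s : Set A) (x : A) :
    x ∈ colonSub M (Submodule.span R s) ↔ ∀ y ∈ s, x * y ∈ M :=
  ⟨fun hx y hy => hx y (Submodule.subset_span hy), fun hs _ hy =>
    Submodule.span_le (p := M.comap (LinearMap.mulLeft R x)) |>.2 hs hy⟩

lemma minGen_span_le_card {R M : Type*} [Semiring R] [AddCommMonoid M] [Module R M]
    (s : Finset M) : minGen R (Submodule.span R (s : Set M)) ≤ s.card :=
  Nat.sInf_le ⟨s, rfl, rfl⟩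

section Generators

variable {k : Type*} [Field k] {l : ℕ} {a : Fin l → ℕ}

lemma insert_one_X_pow_eq_image (c : ℕ) :
    ({1, X ^ c} : Set k⟦X⟧) = (X ^ ·) '' ({0, c} : Set ℕ) := by
  rw [Set.image_pair, pow_zero]

lemma mem_nsHz_or_of_colonSub_eq {c₁ c₂ : ℕ}
    (hJ : colonSub (nsCanon k l a) (Submodule.span (nsRing k l a) {1, X ^ c₁}) =
      Submodule.span (nsRing k l a) {1, X ^ c₂})
    {n : ℤ} (hn : 0 ≤ n) (h₁ : (nsFrob l a : ℤ) - n ∉ nsHz l a)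
    (h₂ : (nsFrob l a : ℤ) - n - c₁ ∉ nsHz l a) : n ∈ nsHz l a ∨ n - c₂ ∈ nsHz l a := by
  lift n to ℕ using hn
  have hcolon : (X : k⟦X⟧) ^ n ∈ colonSub (nsCanon k l a)
      (Submodule.span (nsRing k l a) {1, X ^ c₁}) := by
    simp only [mem_colonSub_span_iff, Set.mem_insert_iff, Set.mem_singleton_iff,
      forall_eq_or_imp, forall_eq, mul_one, ← pow_add, X_pow_mem_nsCanon_iff, Nat.cast_add,
      ← sub_sub]
    exact ⟨h₁, h₂⟩
  rw [hJ, insert_one_X_pow_eq_image, X_pow_mem_span_image_iff] at hcolon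
  simpa using hcolon

open scoped Pointwise in
lemma image_X_pow_mul_image_X_pow (A B : Set ℕ) :
    ((X : k⟦X⟧) ^ ·) '' A * (X ^ ·) '' B = (X ^ ·) '' (A + B) := by
  rw [← Set.image2_mul, Set.image2_image_left, Set.image2_image_right, ← Set.image2_add,
    Set.image_image2]
  simp only [pow_add]

open scoped Pointwise in
lemma pair_add_pair (c₁ c₂ : ℕ) : ({0, c₁} : Set ℕ) + {0, c₂} = {0, c₁, c₂, c₁ + c₂} := by
  ext n
  simp only [Set.mem_add, Set.mem_insert_iff, Set.mem_singleton_iff]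
  aesop

lemma span_pair_mul_span_pair (c₁ c₂ : ℕ) :
    Submodule.span (nsRing k l a) {1, X ^ c₁} * Submodule.span (nsRing k l a) {1, X ^ c₂} =
      Submodule.span (nsRing k l a) (((X : k⟦X⟧) ^ ·) '' {0, c₁, c₂, c₁ + c₂}) := by
  rw [Submodule.span_mul_span, insert_one_X_pow_eq_image, insert_one_X_pow_eq_image,
    image_X_pow_mul_image_X_pow, pair_add_pair]

-- A generator whose exponent exceeds another one by an element of `H` would be redundant.
lemma sub_notMem_nsHz_of_card_le_minGen {Λ : Finset ℕ}
    (hΛ : Λ.card ≤ minGen (nsRing k l a)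
      (Submodule.span (nsRing k l a) (((X : k⟦X⟧) ^ ·) '' Λ)))
    {m m' : ℕ} (hm : m ∈ Λ) (hm' : m' ∈ Λ) (hne : m ≠ m') : (m : ℤ) - m' ∉ nsHz l a := by
  classical
  intro hmm'
  have hred : (X : k⟦X⟧) ^ m ∈ Submodule.span (nsRing k l a) ((X ^ ·) '' ↑(Λ.erase m)) :=
    (X_pow_mem_span_image_iff _ m).2 ⟨m', Finset.mem_erase.2 ⟨hne.symm, hm'⟩, hmm'⟩
  have hspan : Submodule.span (nsRing k l a) (((X : k⟦X⟧) ^ ·) '' Λ) =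
      Submodule.span (nsRing k l a) ((X ^ ·) '' ↑(Λ.erase m)) := by
    conv_lhs => rw [← Finset.insert_erase hm, Finset.coe_insert, Set.image_insert_eq]
    exact Submodule.span_insert_eq_span hred
  rw [hspan, ← Finset.coe_image] at hΛ
  have := (minGen_span_le_card (R := nsRing k l a) ((Λ.erase m).image ((X : k⟦X⟧) ^ ·))).trans
    Finset.card_image_le
  have := Finset.card_erase_lt_of_mem hm
  omega

lemma notMem_nsHz_of_minGen_eq_four {c₁ c₂ : ℕ} (hc₁ : 0 < c₁) (hc₂ : 0 < c₂)
    (hmin : minGen (nsRing k l a)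
      (Submodule.span (nsRing k l a) (((X : k⟦X⟧) ^ ·) '' {0, c₁, c₂, c₁ + c₂})) = 4) :
    c₁ ≠ c₂ ∧ (c₁ : ℤ) ∉ nsHz l a ∧ (c₂ : ℤ) ∉ nsHz l a ∧ (c₁ + c₂ : ℤ) ∉ nsHz l a ∧
      (c₂ : ℤ) - c₁ ∉ nsHz l a ∧ (c₁ : ℤ) - c₂ ∉ nsHz l a := by
  classical
  set Λ : Finset ℕ := {0, c₁, c₂, c₁ + c₂}
  replace hmin : minGen (nsRing k l a)
      (Submodule.span (nsRing k l a) (((X : k⟦X⟧) ^ ·) '' Λ)) = 4 := by simpa [Λ] using hmin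
  have hcard : Λ.card = 4 := by
    have := (minGen_span_le_card (R := nsRing k l a) (Λ.image ((X : k⟦X⟧) ^ ·))).trans
      Finset.card_image_le
    rw [Finset.coe_image, hmin] at this
    exact le_antisymm Finset.card_le_four this
  have key {m m' : ℕ} (hm : m ∈ Λ) (hm' : m' ∈ Λ) (hne : m ≠ m') : (m : ℤ) - m' ∉ nsHz l a :=
    sub_notMem_nsHz_of_card_le_minGen (k := k) (by rw [hmin, hcard]) hm hm' hne
  have hne : c₁ ≠ c₂ := by
    rintro rfl
    have : Λ.card ≤ 3 := by simpa [Λ, Finset.insert_idem] using Finset.card_le_three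
    omega
  refine ⟨hne, ?_, ?_, ?_, ?_, ?_⟩
  · simpa using key (m' := 0) (by simp [Λ]) (by simp [Λ]) hc₁.ne'
  · simpa using key (m' := 0) (by simp [Λ]) (by simp [Λ]) hc₂.ne'
  · simpa using key (m := c₁ + c₂) (m' := 0) (by simp [Λ]) (by simp [Λ]) (by omega)
  · exact key (by simp [Λ]) (by simp [Λ]) hne.symm
  · exact key (by simp [Λ]) (by simp [Λ]) hne

end Generators

-- With `I = (1, t^c₁)` and `J = (1, t^c₂)`, `hcolon` says that every monomial `tⁿ ∈ K : I`
-- (i.e. `F - n ∉ H` and `F - n - c₁ ∉ H`) lies in `J` (i.e. `n ∈ H` or `n - c₂ ∈ H`).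
lemma sub_combinations_mem_nsHz_of_colon {l : ℕ} {a : Fin l → ℕ} {F c₁ c₂ : ℤ}
    (hcond : ∀ n, F < n → n ∈ nsHz l a)
    (hcolon : ∀ n, 0 ≤ n → F - n ∉ nsHz l a → F - n - c₁ ∉ nsHz l a →
      n ∈ nsHz l a ∨ n - c₂ ∈ nsHz l a)
    (hc₁ : 0 < c₁) (hc₂ : 0 < c₂) (hc : c₁ + c₂ ≤ F) (hne : c₁ ≠ c₂)
    (h₁ : c₁ ∉ nsHz l a) (h₂ : c₂ ∉ nsHz l a) (h₁₂ : c₁ + c₂ ∉ nsHz l a)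
    (h₂₁ : c₂ - c₁ ∉ nsHz l a) (h₁₂' : c₁ - c₂ ∉ nsHz l a)
    (hb₁ : F - c₁ ∉ nsHz l a) (hb₂ : F - c₂ ∉ nsHz l a) (hb₃ : F - (c₁ + c₂) ∉ nsHz l a) :
    F - 2 * c₁ ∈ nsHz l a ∧ F - 2 * c₂ ∈ nsHz l a ∧ F - c₁ - 2 * c₂ ∈ nsHz l a ∧
      F - 2 * c₁ - c₂ ∈ nsHz l a ∧ F + c₁ - c₂ ∈ nsHz l a := by
  refine ⟨?_, ?_, ?_, ?_, ?_⟩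
  · by_contra h
    rcases hcolon c₁ hc₁.le hb₁ (by rwa [sub_sub, ← two_mul]) with h' | h'
    exacts [h₁ h', h₁₂' h']
  · by_contra h
    rcases hcolon (F - c₂) (by omega) (by rwa [sub_sub_cancel])
      (by rwa [sub_sub_cancel]) with h' | h'
    · exact hb₂ h'
    · exact h (by convert h' using 1; ring)
  · by_contra h
    rcases hcolon (F - (c₁ + c₂)) (by omega) (by rwa [sub_sub_cancel])
      (by rwa [sub_sub_cancel, add_sub_cancel_left]) with h' | h'
    · exact hb₃ h'
    · exact h (by convert h' using 1; ring)
  · by_contra h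
    rcases hcolon (c₁ + c₂) (by omega) hb₃ (by convert h using 2; ring) with h' | h'
    · exact h₁₂ h'
    · exact h₁ (by simpa using h')
  · rcases lt_or_gt_of_ne hne with hlt | hgt
    · by_contra h
      rcases hcolon (c₂ - c₁) (by omega) (by convert h using 2; ring)
        (by convert hb₂ using 2; ring) with h' | h'
      · exact h₂₁ h'
      · exact absurd (nonneg_of_mem_nsHz h') (by omega)
    · exact hcond _ (by omega)

theorem stmt15_general (k : Type*) [Field k] (l : ℕ) (hl : 0 < l) (a : Fin l → ℕ)
    (c1 c2 : ℕ) (hc1 : 0 < c1) (hc2 : 0 < c2)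
    (I : Submodule (nsRing k l a) (PowerSeries k))
    (hI : I = Submodule.span (nsRing k l a)
      {(1 : PowerSeries k), (PowerSeries.X : PowerSeries k) ^ c1})
    (hJ : colonSub (nsCanon k l a) I = Submodule.span (nsRing k l a)
      {(1 : PowerSeries k), (PowerSeries.X : PowerSeries k) ^ c2})
    (hIJ : I * colonSub (nsCanon k l a) I = nsCanon k l a)
    (hmuK : minGen (nsRing k l a) (nsCanon k l a) = 4)
    (b1 b2 b3 : ℕ)
    (hb1 : b1 ∈ nsS l a (a ⟨0, hl⟩)) (hb2 : b2 ∈ nsS l a (a ⟨0, hl⟩))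
    (hb3 : b3 ∈ nsS l a (a ⟨0, hl⟩))
    (hc1b : (c1 : ℤ) = (nsFrob l a : ℤ) - b1)
    (hc2b : (c2 : ℤ) = (nsFrob l a : ℤ) - b2)
    (hc3b : ((c1 : ℤ) + c2) = (nsFrob l a : ℤ) - b3) :
    ((nsFrob l a : ℤ) = (b1 : ℤ) + b2 - b3 ∧ ((nsFrob l a : ℤ)) ∉ nsHz l a) ∧
    (2 * (b1 : ℤ) - (nsFrob l a : ℤ) = (b1 : ℤ) + b3 - b2 ∧
      ((b1 : ℤ) + b3 - b2) ∈ nsHz l a) ∧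
    (2 * (b2 : ℤ) - (nsFrob l a : ℤ) = (b2 : ℤ) + b3 - b1 ∧
      ((b2 : ℤ) + b3 - b1) ∈ nsHz l a) ∧
    ((b2 : ℤ) + b3 - (nsFrob l a : ℤ) = 2 * (b3 : ℤ) - b1 ∧
      (2 * (b3 : ℤ) - b1) ∈ nsHz l a) ∧
    ((b1 : ℤ) + b3 - (nsFrob l a : ℤ) = 2 * (b3 : ℤ) - b2 ∧
      (2 * (b3 : ℤ) - b2) ∈ nsHz l a) ∧
    (2 * (b2 : ℤ) - b3) ∈ nsHz l a := by
  subst hI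
  rw [hJ, span_pair_mul_span_pair] at hIJ
  rw [← hIJ] at hmuK
  have hF : 0 < nsFrob l a := by omega
  obtain ⟨hne, h₁, h₂, h₁₂, h₂₁, h₁₂'⟩ := notMem_nsHz_of_minGen_eq_four hc1 hc2 hmuK
  have hb {b : ℕ} (hbS : b ∈ nsS l a (a ⟨0, hl⟩)) {c : ℤ} (hc : c = (nsFrob l a : ℤ) - b) :
      (nsFrob l a : ℤ) - c ∉ nsHz l a := by
    rw [hc, sub_sub_cancel, natCast_mem_nsHz]
    exact hbS.1
  obtain ⟨e₁, e₂, e₃, e₄, e₅⟩ := sub_combinations_mem_nsHz_of_colon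
    (fun _ => mem_nsHz_of_nsFrob_lt hF) (fun _ => mem_nsHz_or_of_colonSub_eq hJ)
    (by omega) (by omega) (by omega) (Nat.cast_injective.ne hne) h₁ h₂ h₁₂ h₂₁ h₁₂'
    (hb hb1 hc1b) (hb hb2 hc2b) (hb hb3 hc3b)
  refine ⟨⟨by omega, nsFrob_notMem_nsHz hF⟩, ⟨by omega, ?_⟩, ⟨by omega, ?_⟩, ⟨by omega, ?_⟩,
    ⟨by omega, ?_⟩, ?_⟩
  · convert e₁ using 1; omega
  · convert e₂ using 1; omega
  · convert e₃ using 1; omega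
  · convert e₄ using 1; omega
  · convert e₅ using 1; omega

/-- (Lemma 5.1) Let `I = (1, t^{c_1})`, `J = K_R : I = (1, t^{c_2})` with
`c_1, c_2 > 0`, `IJ = K_R` and `μ_R(K_R) = 4`. Choose `b_1, b_2, b_3 ∈ S` with
`c_1 = a − b_1`, `c_2 = a − b_2`, `c_1 + c_2 = a − b_3`. Then the six arithmetic
assertions of Lemma 5.1 hold. -/
theorem stmt15 (k : Type*) [Field k] (l : ℕ) (hl : 0 < l) (a : Fin l → ℕ)
    (hpos : 0 < a ⟨0, hl⟩) (hmono : StrictMono a) (hgcd : Finset.univ.gcd a = 1)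
    (he2 : 2 ≤ a ⟨0, hl⟩)
    (c1 c2 : ℕ) (hc1 : 0 < c1) (hc2 : 0 < c2)
    (I : Submodule (nsRing k l a) (PowerSeries k))
    (hI : I = Submodule.span (nsRing k l a)
      {(1 : PowerSeries k), (PowerSeries.X : PowerSeries k) ^ c1})
    (hJ : colonSub (nsCanon k l a) I = Submodule.span (nsRing k l a)
      {(1 : PowerSeries k), (PowerSeries.X : PowerSeries k) ^ c2})
    (hIJ : I * colonSub (nsCanon k l a) I = nsCanon k l a)
    (hmuK : minGen (nsRing k l a) (nsCanon k l a) = 4)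
    (b1 b2 b3 : ℕ)
    (hb1 : b1 ∈ nsS l a (a ⟨0, hl⟩)) (hb2 : b2 ∈ nsS l a (a ⟨0, hl⟩))
    (hb3 : b3 ∈ nsS l a (a ⟨0, hl⟩))
    (hc1b : (c1 : ℤ) = (nsFrob l a : ℤ) - b1)
    (hc2b : (c2 : ℤ) = (nsFrob l a : ℤ) - b2)
    (hc3b : ((c1 : ℤ) + c2) = (nsFrob l a : ℤ) - b3) :
    ((nsFrob l a : ℤ) = (b1 : ℤ) + b2 - b3 ∧ ((nsFrob l a : ℤ)) ∉ nsHz l a) ∧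
    (2 * (b1 : ℤ) - (nsFrob l a : ℤ) = (b1 : ℤ) + b3 - b2 ∧
      ((b1 : ℤ) + b3 - b2) ∈ nsHz l a) ∧
    (2 * (b2 : ℤ) - (nsFrob l a : ℤ) = (b2 : ℤ) + b3 - b1 ∧
      ((b2 : ℤ) + b3 - b1) ∈ nsHz l a) ∧
    ((b2 : ℤ) + b3 - (nsFrob l a : ℤ) = 2 * (b3 : ℤ) - b1 ∧
      (2 * (b3 : ℤ) - b1) ∈ nsHz l a) ∧
    ((b1 : ℤ) + b3 - (nsFrob l a : ℤ) = 2 * (b3 : ℤ) - b2 ∧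
      (2 * (b3 : ℤ) - b2) ∈ nsHz l a) ∧
    (2 * (b2 : ℤ) - b3) ∈ nsHz l a :=
  stmt15_general k l hl a c1 c2 hc1 hc2 I hI hJ hIJ hmuK b1 b2 b3 hb1 hb2 hb3 hc1b hc2b hc3b

end
end
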